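/- Let 𝔑 be a nest in a vector space 𝔛 and let M be a finite-dimensional subspace of 𝔛 with dim M = n. Then there exists an idempotent P ∈ Alg 𝔑 with range M, and P can be written as a sum of n rank-one idempotents each lying in Alg 𝔑. -/

import Mathlib

/-! For `x ≠ 0` the members of the nest not containing `x` form a chain, so their join still
misses `x`, and a functional `f` with `f x = 1` vanishing on that join makes `Q = f(·) x` a
rank-one idempotent in `Alg 𝔑`. By induction on `dim M`, the subspace `ker f ⊓ M` is the range
of an idempotent `P'` in `Alg 𝔑`; since `Q P' = 0`, the operator `Q + P'(1 - Q)` is an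
idempotent in `Alg 𝔑` with range `span {x} ⊔ (ker f ⊓ M) = M`, and its rank-one summands are
`Q` and the `P'ᵢ (1 - Q)`. -/

variable {F X : Type*} [Field F] [AddCommGroup X] [Module F X]

/-- A nest: a totally ordered family of subspaces containing `⊥` and `⊤`,
closed under arbitrary intersections and spans (joins) of subfamilies. -/
def IsNest (N : Set (Submodule F X)) : Prop :=
  IsChain (· ≤ ·) N ∧ ⊥ ∈ N ∧ ⊤ ∈ N ∧ ∀ S ⊆ N, sInf S ∈ N ∧ sSup S ∈ N

/-- `𝔑(x)`: the intersection of all members of `𝔑` containing `x`. -/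
def nestAt (N : Set (Submodule F X)) (x : X) : Submodule F X :=
  sInf {M | M ∈ N ∧ x ∈ M}

/-- `𝔑(x)₋`: the union (as a set of vectors) of all members of `𝔑` not containing `x`. -/
def nestBelow (N : Set (Submodule F X)) (x : X) : Set X :=
  ⋃ M ∈ {M | M ∈ N ∧ x ∉ M}, (M : Set X)

/-- `Alg 𝔑`: the set of endomorphisms leaving every member of `𝔑` invariant. -/
def nestAlg (N : Set (Submodule F X)) : Set (Module.End F X) :=
  {T | ∀ M ∈ N, ∀ x ∈ M, T x ∈ M}

open Module LinearMap Submodule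

section Idempotent

variable {R : Type*} [Ring R] {p q : R}

theorem IsIdempotentElem.mul_one_sub_mul_self (hp : IsIdempotentElem p) (h : q * p = 0) :
    p * (1 - q) * p = p := by
  rw [mul_assoc, sub_mul, one_mul, h, sub_zero, hp.eq]

theorem IsIdempotentElem.mul_one_sub (hp : IsIdempotentElem p) (h : q * p = 0) :
    IsIdempotentElem (p * (1 - q)) := by
  rw [IsIdempotentElem, ← mul_assoc, hp.mul_one_sub_mul_self h]

theorem add_mul_one_sub_mul_self (hq : IsIdempotentElem q) : (q + p * (1 - q)) * q = q := by
  rw [add_mul, hq.eq, mul_assoc, sub_mul, one_mul, hq.eq, sub_self, mul_zero, add_zero]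

theorem IsIdempotentElem.add_mul_one_sub_mul (hp : IsIdempotentElem p) (h : q * p = 0) :
    (q + p * (1 - q)) * p = p := by
  rw [add_mul, h, zero_add, hp.mul_one_sub_mul_self h]

theorem IsIdempotentElem.add_mul_one_sub (hq : IsIdempotentElem q) (hp : IsIdempotentElem p)
    (h : q * p = 0) : IsIdempotentElem (q + p * (1 - q)) := by
  rw [IsIdempotentElem, mul_add, ← mul_assoc, add_mul_one_sub_mul_self hq,
    hp.add_mul_one_sub_mul h]

end Idempotent

section EndRange

variable {R M : Type*} [Ring R] [AddCommGroup M] [Module R M] {P Q S T : Module.End R M}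

theorem range_le_of_mul_eq (h : S * T = T) : range T ≤ range S := by
  rw [← h]
  exact range_comp_le_range T S

theorem range_mul_one_sub (hP : IsIdempotentElem P) (h : Q * P = 0) :
    range (P * (1 - Q)) = range P :=
  le_antisymm (range_comp_le_range _ _) (range_le_of_mul_eq (hP.mul_one_sub_mul_self h))

theorem range_add_mul_one_sub (hQ : IsIdempotentElem Q) (hP : IsIdempotentElem P)
    (h : Q * P = 0) :
    range (Q + P * (1 - Q)) = range Q ⊔ range P := by
  refine le_antisymm ((range_add_le _ _).trans (sup_le_sup_left (range_comp_le_range _ _) _)) ?_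
  exact sup_le (range_le_of_mul_eq (add_mul_one_sub_mul_self hQ))
    (range_le_of_mul_eq (hP.add_mul_one_sub_mul h))

end EndRange

section SmulRight

variable {R M : Type*} [CommRing R] [AddCommGroup M] [Module R M] {f : Dual R M} {x : M}

theorem isIdempotentElem_smulRight (h : f x = 1) : IsIdempotentElem (f.smulRight x) := by
  ext y
  simp [h]

theorem smulRight_mul_eq_zero {T : Module.End R M} (h : range T ≤ ker f) :
    f.smulRight x * T = 0 := by
  ext y
  simp [mem_ker.mp (h (mem_range_self T y))]

end SmulRight

theorem Submodule.notMem_sSup_of_isChain {R M : Type*} [Ring R] [AddCommGroup M] [Module R M]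
    {C : Set (Submodule R M)} (hC : IsChain (· ≤ ·) C) {x : M} (hx : x ≠ 0)
    (hxC : ∀ A ∈ C, x ∉ A) : x ∉ sSup C := by
  rcases C.eq_empty_or_nonempty with rfl | hne
  · simpa using hx
  · rw [mem_sSup_of_directed hne hC.directedOn]
    rintro ⟨A, hA, hxA⟩
    exact hxC A hA hxA

theorem span_singleton_sup_ker_inf_eq {f : Dual F X} {x : X} {M : Submodule F X}
    (hxM : x ∈ M) (hfx : f x ≠ 0) : span F {x} ⊔ ker f ⊓ M = M := by
  rw [← sup_inf_assoc_of_le _ (span_singleton_le_iff_mem _ _ |>.mpr hxM),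
    span_singleton_sup_ker_eq_top f hfx, top_inf_eq]

theorem finrank_ker_inf_add_one {f : Dual F X} {x : X} {M : Submodule F X}
    [FiniteDimensional F M] (hxM : x ∈ M) (hfx : f x ≠ 0) :
    finrank F ↥(ker f ⊓ M) + 1 = finrank F M := by
  have hx : x ≠ 0 := fun h => hfx (h ▸ map_zero f)
  have hdisj : Disjoint (span F {x}) (ker f ⊓ M) :=
    ((disjoint_span_singleton' hx).mpr fun h => hfx (mem_ker.mp (mem_inf.mp h).1)).symm
  have := finrank_sup_add_finrank_inf_eq (span F {x}) (ker f ⊓ M)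
  rw [span_singleton_sup_ker_inf_eq hxM hfx, hdisj.eq_bot, finrank_bot, finrank_span_singleton hx]
    at this
  omega

def nestSubalgebra (N : Set (Submodule F X)) : Subalgebra F (Module.End F X) where
  carrier := nestAlg N
  mul_mem' hS hT A hA x hx := hS A hA _ (hT A hA x hx)
  add_mem' hS hT A hA x hx := A.add_mem (hS A hA x hx) (hT A hA x hx)
  algebraMap_mem' c A _ x hx := by simpa using A.smul_mem c hx

theorem smulRight_mem_nestAlg {N : Set (Submodule F X)} {f : Dual F X} {x : X}
    (hf : ∀ A ∈ N, x ∉ A → A ≤ ker f) : f.smulRight x ∈ nestAlg N := by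
  intro A hA y hy
  by_cases hxA : x ∈ A
  · exact A.smul_mem _ hxA
  · simp [mem_ker.mp (hf A hA hxA hy)]

theorem exists_dual_eq_one_forall_le_ker {N : Set (Submodule F X)}
    (hN : IsChain (· ≤ ·) N) {x : X} (hx : x ≠ 0) :
    ∃ f : Dual F X, f x = 1 ∧ ∀ A ∈ N, x ∉ A → A ≤ ker f := by
  obtain ⟨g, hgx, hg⟩ := exists_dual_map_eq_bot_of_notMem
    (notMem_sSup_of_isChain (C := {A | A ∈ N ∧ x ∉ A}) (hN.mono fun _ hA => hA.1) hx
      fun _ hA => hA.2) inferInstance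
  refine ⟨(g x)⁻¹ • g, inv_mul_cancel₀ hgx, fun A hA hxA => ?_⟩
  rw [ker_smul _ _ (inv_ne_zero hgx)]
  exact (le_sSup (show A ∈ {A | A ∈ N ∧ x ∉ A} from ⟨hA, hxA⟩)).trans
    (le_ker_iff_map.mpr hg)

theorem exists_rankOne_idempotents_sum_range_eq {N : Set (Submodule F X)}
    (hN : IsChain (· ≤ ·) N) :
    ∀ (n : ℕ) (M : Submodule F X) [FiniteDimensional F M], finrank F M = n →
    ∃ Ps : Fin n → Module.End F X,
      (∀ i, Ps i ∈ nestAlg N ∧ IsIdempotentElem (Ps i) ∧ range (Ps i) ≤ M ∧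
        Module.rank F (range (Ps i)) = 1) ∧
      IsIdempotentElem (∑ i, Ps i) ∧ range (∑ i, Ps i) = M
  | 0, M, _, hM => ⟨Fin.elim0, fun i => i.elim0, by simp [IsIdempotentElem],
      by simpa [eq_comm] using hM⟩
  | n + 1, M, _, hM => by
    obtain ⟨x, hxM, hx⟩ := exists_mem_ne_zero_of_ne_bot (p := M) fun h => by
      have := Submodule.finrank_eq_zero.mpr h; omega
    obtain ⟨f, hfx, hf⟩ := exists_dual_eq_one_forall_le_ker hN hx
    have hfx₀ : f x ≠ 0 := hfx ▸ one_ne_zero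
    obtain ⟨Ps, hPs, hP, hPrange⟩ := exists_rankOne_idempotents_sum_range_eq hN n (ker f ⊓ M)
      (by have := finrank_ker_inf_add_one hxM hfx₀; omega)
    set Q : Module.End F X := f.smulRight x
    have hQ : IsIdempotentElem Q := isIdempotentElem_smulRight hfx
    have hQalg : Q ∈ nestAlg N := smulRight_mem_nestAlg hf
    have hQrange : range Q = span F {x} := range_smulRight_apply (fun h => by simp [h] at hfx) x
    have hQPs : ∀ i, Q * Ps i = 0 := fun i =>
      smulRight_mul_eq_zero ((hPs i).2.2.1.trans inf_le_left)
    have hQP : Q * ∑ i, Ps i = 0 := by simp [Finset.mul_sum, hQPs]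
    have hsum : ∑ i, (Fin.cons Q fun i => Ps i * (1 - Q) : Fin (n + 1) → Module.End F X) i =
        Q + (∑ i, Ps i) * (1 - Q) := by
      rw [Fin.sum_cons, Finset.sum_mul]
    refine ⟨Fin.cons Q fun i => Ps i * (1 - Q), fun i => ?_, ?_, ?_⟩
    · refine Fin.cases ?_ (fun i => ?_) i
      · rw [Fin.cons_zero, hQrange]
        exact ⟨hQalg, hQ, (span_singleton_le_iff_mem x M).mpr hxM,
          rank_eq_one_iff_finrank_eq_one.mpr (finrank_span_singleton hx)⟩
      · obtain ⟨hPalg, hPidem, hPM, hPrank⟩ := hPs i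
        rw [Fin.cons_succ, range_mul_one_sub hPidem (hQPs i)]
        exact ⟨(nestSubalgebra N).mul_mem hPalg (sub_mem (one_mem _) hQalg),
          hPidem.mul_one_sub (hQPs i), hPM.trans inf_le_right, hPrank⟩
    · rw [hsum]
      exact hQ.add_mul_one_sub hP hQP
    · rw [hsum, range_add_mul_one_sub hQ hP hQP, hQrange, hPrange,
        span_singleton_sup_ker_inf_eq hxM hfx₀]

/-- a finite-dimensional subspace is the range of an idempotent in
`Alg 𝔑`, which is a sum of `n = dim M` rank-one idempotents in `Alg 𝔑`. -/
theorem exists_idempotent_range_eq {N : Set (Submodule F X)} (hN : IsNest N)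
    (M : Submodule F X) [FiniteDimensional F M] {n : ℕ} (hn : Module.finrank F M = n) :
    ∃ P : Module.End F X, P ∈ nestAlg N ∧ P * P = P ∧ LinearMap.range P = M ∧
      ∃ Ps : Fin n → Module.End F X,
        (∀ i, Ps i ∈ nestAlg N ∧ Ps i * Ps i = Ps i ∧
          Module.rank F (LinearMap.range (Ps i)) = 1) ∧
        P = ∑ i, Ps i := by
  obtain ⟨Ps, hPs, hP, hrange⟩ := exists_rankOne_idempotents_sum_range_eq hN.1 n M hn
  exact ⟨∑ i, Ps i, (nestSubalgebra N).sum_mem fun i _ => (hPs i).1, hP, hrange,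
    Ps, fun i => ⟨(hPs i).1, (hPs i).2.1, (hPs i).2.2.2⟩, rfl⟩
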